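/- arXiv:2411.18992 — 4 statements merged into one kernel-verified Lean document; each statement's English description precedes it below -/
import Mathlib

section
/- Let m ≥ 3 and let n be a positive multiple of 11, and let 0 ≤ ℓ < n. Suppose there exist an integer k and a ∈ {1,2} such that ℓ = (11k + (−1)^a·4m) mod n or ℓ = (11k + (−1)^a·3m) mod n. Then the λ-number of the strong graph bundle C_m ⊠^{σ_ℓ} C_n equals 10. -/
/-- One-directional step relation for the strong graph bundle `C_m ⊠^{σ_ℓ} C_n`:
(i) fiber edges, (ii) base steps `i → i+1` for `0 ≤ i ≤ m-2`,
(iii) seam edges from fiber over `m-1` to fiber over `0`, twisted by the cyclic `ℓ`-shift. -/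
def bundleStep (m n ℓ : ℕ) (u v : Fin m × ZMod n) : Prop :=
  (u.1 = v.1 ∧ (v.2 = u.2 + 1 ∨ v.2 = u.2 - 1)) ∨
  ((u.1 : ℕ) + 1 = (v.1 : ℕ) ∧ (v.2 = u.2 - 1 ∨ v.2 = u.2 ∨ v.2 = u.2 + 1)) ∨
  ((u.1 : ℕ) = m - 1 ∧ (v.1 : ℕ) = 0 ∧
    (v.2 = u.2 + (ℓ : ZMod n) - 1 ∨ v.2 = u.2 + (ℓ : ZMod n) ∨ v.2 = u.2 + (ℓ : ZMod n) + 1))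

/-- The strong graph bundle `C_m ⊠^{σ_ℓ} C_n` with base cycle `C_m`, fiber cycle `C_n`
and cyclic `ℓ`-shift. -/
def strongBundle (m n ℓ : ℕ) : SimpleGraph (Fin m × ZMod n) where
  Adj u v := u ≠ v ∧ (bundleStep m n ℓ u v ∨ bundleStep m n ℓ v u)
  symm := ⟨fun u v ⟨h1, h2⟩ => ⟨h1.symm, h2.symm⟩⟩
  loopless := ⟨fun u h => h.1 rfl⟩

/-- `f` is an `L(2,1)`-labeling of `G`: labels of adjacent vertices differ by at least 2,
labels of vertices at distance 2 differ by at least 1. -/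
def IsL21Labeling {V : Type*} (G : SimpleGraph V) (f : V → ℕ) : Prop :=
  (∀ u v, G.Adj u v → 2 ≤ |(f u : ℤ) - (f v : ℤ)|) ∧
  (∀ u v, G.dist u v = 2 → 1 ≤ |(f u : ℤ) - (f v : ℤ)|)

/-- The span of a labeling: largest label minus smallest label. -/
noncomputable def spanOf {V : Type*} (f : V → ℕ) : ℕ :=
  sSup (Set.range f) - sInf (Set.range f)

/-- The `λ`-number of `G`: the minimum span over all `L(2,1)`-labelings of `G`. -/
noncomputable def lambdaNumber {V : Type*} (G : SimpleGraph V) : ℕ :=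
  sInf { s : ℕ | ∃ f : V → ℕ, IsL21Labeling G f ∧ spanOf f = s }

/-!
The bundle is covered by the king graph on `ℤ²`: the step `lift` along the base cycle (which
crosses the seam with the twist `ℓ`) commutes with the fibre rotations, so together they give an
action `translate` of `ℤ²`, and `u ~ v` exactly when `v` is `u` translated by a king move.

Upper bound: `(i, j) ↦ a i + b j (mod 11)` is well defined on the bundle when `a m = b ℓ` in
`ZMod 11`, and it is an `L(2,1)`-labeling with labels `0, …, 10` as soon as `a p + b q` avoids
`0, ±1` on king moves `(p, q)` and avoids `0` on nonzero sums of two king moves. The hypothesis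
on `ℓ` says `ℓ ≡ c m (mod 11)` with `c ∈ {±3, ±4}`, and then `(b c, b)` works for a suitable `b`.

Lower bound: every vertex has 8 neighbours, whose labels are pairwise distinct. With span at
most 9, a vertex with a label strictly inside the range leaves only 7 admissible labels for them;
so every label is extremal, and then all neighbours of a vertex with the least label carry the
greatest one.
-/

open Finset

lemma Equiv.Perm.apply_zpow_apply_eq_add_zsmul {α A : Type*} [AddCommGroup A] {σ : Equiv.Perm α}
    {f : α → A} {a : A} (h : ∀ x, f (σ x) = f x + a) (p : ℤ) (x : α) :
    f ((σ ^ p) x) = f x + p • a := by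
  induction p using Int.induction_on generalizing x with
  | zero => simp
  | succ p ih =>
    rw [zpow_add_one, Equiv.Perm.mul_apply, ih, h, add_zsmul, one_zsmul]
    abel
  | pred p ih =>
    have h' : f (σ⁻¹ x) = f x - a := by simpa using eq_sub_of_add_eq (h (σ⁻¹ x)).symm
    rw [zpow_sub_one, Equiv.Perm.mul_apply, ih, sub_zsmul, one_zsmul, h']
    abel

lemma Fin.val_finRotate {m : ℕ} (i : Fin m) :
    (finRotate m i : ℕ) = if (i : ℕ) + 1 = m then 0 else (i : ℕ) + 1 := by
  obtain ⟨k, rfl⟩ := Nat.exists_eq_add_one_of_ne_zero (Nat.pos_iff_ne_zero.mp i.pos)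
  rw [coe_finRotate]
  simp [Fin.ext_iff]

lemma ZMod.two_le_abs_val_sub_val {k : ℕ} [NeZero k] {x y : ZMod k}
    (h : x - y ∉ ({-1, 0, 1} : Finset (ZMod k))) : 2 ≤ |(x.val : ℤ) - y.val| := by
  by_contra! hlt
  have hcast : (((x.val : ℤ) - y.val : ℤ) : ZMod k) = x - y := by simp
  have hd : (x.val : ℤ) - y.val = -1 ∨ (x.val : ℤ) - y.val = 0 ∨ (x.val : ℤ) - y.val = 1 := by
    rw [abs_lt] at hlt
    omega
  apply h
  rcases hd with hd | hd | hd <;> rw [hd] at hcast <;> simp [← hcast]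

lemma ZMod.one_le_abs_val_sub_val {k : ℕ} [NeZero k] {x y : ZMod k} (h : x ≠ y) :
    1 ≤ |(x.val : ℤ) - y.val| := by
  refine Int.one_le_abs (sub_ne_zero.mpr fun hv => h (ZMod.val_injective k ?_))
  exact_mod_cast hv

lemma ZMod.natCast_eq_intCast_of_eq_emod {k n x : ℕ} (hk : k ∣ n) {X : ℤ} (h : (x : ℤ) = X % n) :
    (x : ZMod k) = X := by
  have hkn : (k : ℤ) ∣ n := Int.natCast_dvd_natCast.mpr hk
  rw [← ZMod.intCast_mod X k, ← Int.emod_emod_of_dvd X hkn, ← h, ZMod.intCast_mod]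
  simp

section Labeling

open SimpleGraph

variable {V : Type*} {G : SimpleGraph V} {f : V → ℕ}

lemma IsL21Labeling.ne_of_adj_of_adj (hf : IsL21Labeling G f) {u v w : V}
    (hv : G.Adj u v) (hw : G.Adj u w) (hvw : v ≠ w) : f v ≠ f w := by
  intro heq
  by_cases hadj : G.Adj v w
  · simpa [heq] using hf.1 v w hadj
  · have hd : G.edist v w = 2 := edist_eq_two_iff.mpr ⟨hvw, hadj, u, hv.symm, hw.symm⟩
    simpa [heq] using hf.2 v w (by simp [SimpleGraph.dist, hd])

lemma IsL21Labeling.add_two_le_spanOf [Finite V] [Nonempty V] (hf : IsL21Labeling G f)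
    {k : ℕ} (hk : 2 ≤ k) (hdeg : ∀ u, k ≤ (G.neighborSet u).ncard) : k + 2 ≤ spanOf f := by
  set lo := sInf (Set.range f)
  set hi := sSup (Set.range f)
  have hlo : ∀ u, lo ≤ f u := fun u => Nat.sInf_le ⟨u, rfl⟩
  have hhi : ∀ u, f u ≤ hi := fun u => le_csSup (Set.finite_range f).bddAbove ⟨u, rfl⟩
  obtain ⟨u₀, hu₀⟩ : lo ∈ Set.range f := Nat.sInf_mem (Set.range_nonempty f)
  have hcount : ∀ u (S : Finset ℕ), (∀ v, G.Adj u v → f v ∈ S) → k ≤ S.card := fun u S hS =>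
    calc k ≤ (G.neighborSet u).ncard := hdeg u
      _ ≤ (S : Set ℕ).ncard := Set.ncard_le_ncard_of_injOn f (fun v hv => hS v hv)
          (fun v hv w hw hfvw => by_contra fun hvw => hf.ne_of_adj_of_adj hv hw hvw hfvw)
      _ = S.card := Set.ncard_coe_finset S
  have hsep : ∀ u v, G.Adj u v → f v + 2 ≤ f u ∨ f u + 2 ≤ f v := fun u v huv => by
    have := hf.1 u v huv
    rw [le_abs] at this
    omega
  by_contra! hspan
  have hspan' : hi ≤ lo + k + 1 := by unfold spanOf at hspan; omega
  -- A label strictly between `lo` and `hi` forbids three of the at most `k + 2` labels.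
  have hext : ∀ u, f u = lo ∨ f u = hi := fun u => by
    by_contra! hmid
    have hlt := lt_of_le_of_ne (hlo u) hmid.1.symm
    have hgt := lt_of_le_of_ne (hhi u) hmid.2
    have hsub : Icc (f u - 1) (f u + 1) ⊆ Icc lo hi := Icc_subset_Icc (by omega) (by omega)
    have := hcount u (Icc lo hi \ Icc (f u - 1) (f u + 1)) fun v huv => by
      have := hsep u v huv
      simp only [mem_sdiff, mem_Icc]
      exact ⟨⟨hlo v, hhi v⟩, by omega⟩
    rw [card_sdiff_of_subset hsub, Nat.card_Icc, Nat.card_Icc] at this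
    omega
  have := hcount u₀ {hi} fun v huv => mem_singleton.mpr <| (hext v).resolve_left fun hv => by
    have := hsep u₀ v huv
    omega
  rw [card_singleton] at this
  omega

lemma SimpleGraph.exists_adj_adj_of_dist_eq_two {u v : V} (h : G.dist u v = 2) :
    u ≠ v ∧ ∃ w, G.Adj u w ∧ G.Adj w v := by
  have hedist : G.edist u v = 2 := by
    rw [← (Reachable.of_dist_ne_zero (by omega)).coe_dist_eq_edist, h]
    rfl
  obtain ⟨hne, -, w, huw, hvw⟩ := edist_eq_two_iff.mp hedist
  exact ⟨hne, w, huw, hvw.symm⟩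

lemma spanOf_le_of_forall_le {s : ℕ} (h : ∀ v, f v ≤ s) : spanOf f ≤ s := by
  have : sSup (Set.range f) ≤ s := csSup_le' (by rintro _ ⟨v, rfl⟩; exact h v)
  unfold spanOf
  omega

lemma lambdaNumber_eq_of_isL21Labeling {f : V → ℕ} {s : ℕ} (hf : IsL21Labeling G f)
    (hs : spanOf f ≤ s) (hlow : ∀ g, IsL21Labeling G g → s ≤ spanOf g) : lambdaNumber G = s :=
  le_antisymm (Nat.sInf_le ⟨f, hf, le_antisymm hs (hlow f hf)⟩)
    (le_csInf ⟨_, f, hf, rfl⟩ fun _ ⟨g, hg, hgs⟩ => hgs ▸ hlow g hg)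

end Labeling

open Pointwise

namespace StrongBundle

variable {m n ℓ : ℕ}

def seamShift (m n ℓ : ℕ) (i : Fin m) : ZMod n := if (i : ℕ) + 1 = m then ℓ else 0

def lift (m n ℓ : ℕ) : Equiv.Perm (Fin m × ZMod n) :=
  Equiv.prodShear (finRotate m) fun i => Equiv.addRight (seamShift m n ℓ i)

def fiberShift (c : ZMod n) : Equiv.Perm (Fin m × ZMod n) :=
  Equiv.prodCongr (Equiv.refl _) (Equiv.addRight c)

@[simp] lemma fiberShift_apply (c : ZMod n) (u : Fin m × ZMod n) :
    fiberShift c u = (u.1, u.2 + c) := rfl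

lemma fiberShift_add (c c' : ZMod n) :
    (fiberShift (c + c') : Equiv.Perm (Fin m × ZMod n)) = fiberShift c * fiberShift c' := by
  ext u <;> simp [add_right_comm, add_assoc]

lemma commute_lift_fiberShift (c : ZMod n) : Commute (lift m n ℓ) (fiberShift c) := by
  ext u <;> simp [lift, add_right_comm]

def translate (m n ℓ : ℕ) (d : ℤ × ℤ) : Equiv.Perm (Fin m × ZMod n) :=
  lift m n ℓ ^ d.1 * fiberShift (d.2 : ZMod n)

lemma translate_add (d e : ℤ × ℤ) :
    translate m n ℓ (d + e) = translate m n ℓ d * translate m n ℓ e := by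
  simp only [translate, Prod.fst_add, Prod.snd_add, zpow_add, Int.cast_add, fiberShift_add]
  rw [((commute_lift_fiberShift _).zpow_left e.1).symm.mul_mul_mul_comm]

lemma translate_zero : translate m n ℓ 0 = 1 := by
  ext u <;> simp [translate]

lemma translate_neg_apply (d : ℤ × ℤ) (u : Fin m × ZMod n) :
    translate m n ℓ (-d) (translate m n ℓ d u) = u := by
  rw [← Equiv.Perm.mul_apply, ← translate_add, neg_add_cancel, translate_zero,
    Equiv.Perm.one_apply]

lemma eq_lift_fiberShift_iff {c : ZMod n} {u v : Fin m × ZMod n} :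
    v = lift m n ℓ (fiberShift c u) ↔
      ((u.1 : ℕ) + 1 = v.1 ∧ v.2 = u.2 + c) ∨
      ((u.1 : ℕ) = m - 1 ∧ (v.1 : ℕ) = 0 ∧ v.2 = u.2 + ℓ + c) := by
  have hm := u.1.pos
  simp only [lift, seamShift, Equiv.prodShear_apply, fiberShift_apply, Equiv.coe_addRight,
    Prod.ext_iff, Fin.ext_iff, Fin.val_finRotate]
  split_ifs with h
  · constructor
    · rintro ⟨h1, h2⟩
      exact Or.inr ⟨by omega, h1, by rw [h2]; ring⟩
    · rintro (⟨h1, -⟩ | ⟨-, h2, h3⟩)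
      · omega
      · exact ⟨h2, by rw [h3]; ring⟩
  · constructor
    · rintro ⟨h1, h2⟩
      exact Or.inl ⟨h1.symm, by rw [h2]; ring⟩
    · rintro (⟨h1, h2⟩ | ⟨h1, h2, -⟩)
      · exact ⟨h1.symm, by rw [h2]; ring⟩
      · omega

def forwardMoves : Finset (ℤ × ℤ) := {(0, 1), (0, -1), (1, -1), (1, 0), (1, 1)}

def kingMoves : Finset (ℤ × ℤ) := forwardMoves ∪ -forwardMoves

lemma bundleStep_iff {u v : Fin m × ZMod n} :
    bundleStep m n ℓ u v ↔ ∃ d ∈ forwardMoves, v = translate m n ℓ d u := by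
  simp only [forwardMoves, translate, mem_insert, mem_singleton, exists_eq_or_imp,
    exists_eq_left, zpow_zero, zpow_one, Equiv.Perm.mul_apply, Equiv.Perm.one_apply,
    eq_lift_fiberShift_iff]
  simp only [bundleStep, fiberShift_apply, Prod.ext_iff, Int.reduceNeg, Int.cast_neg,
    Int.cast_one, Int.cast_zero, add_zero, sub_eq_add_neg, eq_comm]
  tauto

lemma strongBundle_adj_iff {u v : Fin m × ZMod n} :
    (strongBundle m n ℓ).Adj u v ↔ u ≠ v ∧ ∃ d ∈ kingMoves, v = translate m n ℓ d u := by
  simp only [strongBundle, bundleStep_iff]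
  refine and_congr_right fun _ => ⟨?_, ?_⟩
  · rintro (⟨d, hd, rfl⟩ | ⟨d, hd, rfl⟩)
    · exact ⟨d, mem_union_left _ hd, rfl⟩
    · exact ⟨-d, mem_union_right _ (by simpa using hd), (translate_neg_apply d v).symm⟩
  · rintro ⟨d, hd, rfl⟩
    rcases mem_union.mp hd with hd | hd
    · exact Or.inl ⟨d, hd, rfl⟩
    · exact Or.inr ⟨-d, mem_neg'.mp hd, (translate_neg_apply d u).symm⟩

section LinearLabel

variable {A : Type*} [AddCommGroup A] (a : A) (β : ZMod n →+ A)

def linearLabel (u : Fin m × ZMod n) : A := (u.1 : ℕ) • a + β u.2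

variable {a β}

lemma linearLabel_lift (hseam : m • a = β ℓ) (u : Fin m × ZMod n) :
    linearLabel a β (lift m n ℓ u) = linearLabel a β u + a := by
  simp only [linearLabel, lift, seamShift, Equiv.prodShear_apply, Equiv.coe_addRight,
    Fin.val_finRotate, map_add]
  split_ifs with h
  · rw [← h, succ_nsmul] at hseam
    rw [zero_smul, ← hseam]
    abel
  · rw [map_zero, succ_nsmul, add_zero]
    abel

lemma linearLabel_translate (hseam : m • a = β ℓ) (d : ℤ × ℤ) (u : Fin m × ZMod n) :
    linearLabel a β (translate m n ℓ d u) = linearLabel a β u + d.1 • a + β d.2 := by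
  rw [translate, Equiv.Perm.mul_apply,
    (lift m n ℓ).apply_zpow_apply_eq_add_zsmul (linearLabel_lift hseam)]
  simp only [linearLabel, fiberShift_apply, map_add]
  abel

end LinearLabel

lemma abs_le_one_of_mem_kingMoves : ∀ d ∈ kingMoves, |d.1| ≤ 1 ∧ |d.2| ≤ 1 := by decide

lemma zero_notMem_kingMoves : (0 : ℤ × ℤ) ∉ kingMoves := by decide

lemma eq_zero_of_translate_apply_eq_self (hm : 3 ≤ m) (hn : 3 ≤ n) {d : ℤ × ℤ}
    (h1 : |d.1| ≤ 2) (h2 : |d.2| ≤ 2) {u : Fin m × ZMod n} (h : translate m n ℓ d u = u) :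
    d = 0 := by
  -- The base coordinate, read in `ZMod m`, is the linear label with `a = 1` and `β = 0`.
  have hbase := linearLabel_translate (ℓ := ℓ) (a := (1 : ZMod m)) (β := 0) (by simp) d u
  rw [h, AddMonoidHom.zero_apply, add_zero, left_eq_add, zsmul_one,
    ZMod.intCast_zmod_eq_zero_iff_dvd] at hbase
  have hp : d.1 = 0 := Int.eq_zero_of_abs_lt_dvd hbase (by omega)
  have hfiber : (u.1, u.2 + (d.2 : ZMod n)) = u := by simpa [translate, hp] using h
  rw [Prod.ext_iff, add_eq_left, ZMod.intCast_zmod_eq_zero_iff_dvd] at hfiber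
  exact Prod.ext hp (Int.eq_zero_of_abs_lt_dvd hfiber.2 (by omega))

lemma injOn_translate (hm : 3 ≤ m) (hn : 3 ≤ n) (u : Fin m × ZMod n) :
    Set.InjOn (fun d => translate m n ℓ d u) kingMoves := by
  intro d hd e he hde
  have hd' := abs_le_one_of_mem_kingMoves d hd
  have he' := abs_le_one_of_mem_kingMoves e he
  have h : translate m n ℓ (d - e) (translate m n ℓ e u) = translate m n ℓ e u := by
    rw [← Equiv.Perm.mul_apply, ← translate_add, sub_add_cancel]
    exact hde
  refine sub_eq_zero.mp (eq_zero_of_translate_apply_eq_self hm hn ?_ ?_ h)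
  · exact (abs_sub _ _).trans (by omega)
  · exact (abs_sub _ _).trans (by omega)

lemma eight_le_ncard_neighborSet (hm : 3 ≤ m) (hn : 3 ≤ n) (u : Fin m × ZMod n) :
    8 ≤ ((strongBundle m n ℓ).neighborSet u).ncard := by
  have : NeZero n := ⟨by omega⟩
  have hsub :
      (fun d => translate m n ℓ d u) '' kingMoves ⊆ (strongBundle m n ℓ).neighborSet u := by
    rintro _ ⟨d, hd, rfl⟩
    refine strongBundle_adj_iff.mpr ⟨fun h => zero_notMem_kingMoves ?_, d, hd, rfl⟩
    have hd' := abs_le_one_of_mem_kingMoves d hd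
    rwa [← eq_zero_of_translate_apply_eq_self hm hn (by omega) (by omega) h.symm]
  calc 8 = (kingMoves : Set (ℤ × ℤ)).ncard := by rw [Set.ncard_coe_finset]; rfl
    _ = ((fun d => translate m n ℓ d u) '' kingMoves).ncard :=
      (injOn_translate hm hn u).ncard_image.symm
    _ ≤ _ := Set.ncard_le_ncard hsub

variable {k : ℕ}

def weight (a b : ZMod k) (d : ℤ × ℤ) : ZMod k := d.1 * a + d.2 * b

def IsGoodPair (a b : ZMod k) : Prop :=
  (∀ d ∈ kingMoves, weight a b d ∉ ({-1, 0, 1} : Finset (ZMod k))) ∧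
  ∀ d ∈ kingMoves, ∀ e ∈ kingMoves, d + e ≠ 0 → weight a b (d + e) ≠ 0

-- For instance `b = 5` when `c = ±4` and `b = 2` when `c = ±3`.
lemma exists_isGoodPair :
    ∀ c ∈ ({4, -4, 3, -3} : Finset (ZMod 11)), ∃ b, IsGoodPair (b * c) b := by
  unfold IsGoodPair
  decide

def zmodLabel (hk : k ∣ n) (a b : ZMod k) : Fin m × ZMod n → ZMod k :=
  linearLabel a ((AddMonoidHom.mulLeft b).comp (ZMod.castHom hk (ZMod k)).toAddMonoidHom)

lemma zmodLabel_translate (hk : k ∣ n) {a b : ZMod k} (hseam : (m : ZMod k) * a = b * ℓ)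
    (d : ℤ × ℤ) (u : Fin m × ZMod n) :
    zmodLabel hk a b (translate m n ℓ d u) = zmodLabel hk a b u + weight a b d := by
  rw [zmodLabel, linearLabel_translate (by simpa using hseam), weight, add_assoc]
  simp [mul_comm]

lemma isL21Labeling_val_zmodLabel [NeZero k] (hk : k ∣ n) {a b : ZMod k} (hab : IsGoodPair a b)
    (hseam : (m : ZMod k) * a = b * ℓ) :
    IsL21Labeling (strongBundle m n ℓ) fun u => (zmodLabel hk a b u).val := by
  constructor
  · intro u v huv
    obtain ⟨-, d, hd, rfl⟩ := strongBundle_adj_iff.mp huv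
    rw [abs_sub_comm]
    refine ZMod.two_le_abs_val_sub_val ?_
    rw [zmodLabel_translate hk hseam, add_sub_cancel_left]
    exact hab.1 d hd
  · intro u v huv
    obtain ⟨hne, w, huw, hwv⟩ := SimpleGraph.exists_adj_adj_of_dist_eq_two huv
    obtain ⟨-, e, he, rfl⟩ := strongBundle_adj_iff.mp huw
    obtain ⟨-, d, hd, rfl⟩ := strongBundle_adj_iff.mp hwv
    rw [← Equiv.Perm.mul_apply, ← translate_add] at hne ⊢
    have hde : d + e ≠ 0 := fun h => hne (by rw [h, translate_zero, Equiv.Perm.one_apply])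
    refine ZMod.one_le_abs_val_sub_val fun h => hab.2 d hd e he hde ?_
    rw [zmodLabel_translate hk hseam] at h
    exact left_eq_add.mp h

lemma exists_natCast_eq_mul (hn : 11 ∣ n)
    (h : ∃ k : ℤ, ∃ a ∈ ({1, 2} : Set ℕ),
      (ℓ : ℤ) = (11 * k + (-1 : ℤ) ^ a * (4 * m)) % n ∨
      (ℓ : ℤ) = (11 * k + (-1 : ℤ) ^ a * (3 * m)) % n) :
    ∃ c ∈ ({4, -4, 3, -3} : Finset (ZMod 11)), (ℓ : ZMod 11) = c * m := by
  have h11 : (11 : ZMod 11) = 0 := by decide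
  obtain ⟨k, a, ha, hX | hX⟩ := h <;> have hℓ := ZMod.natCast_eq_intCast_of_eq_emod hn hX <;>
    push_cast [h11] at hℓ
  · refine ⟨(-1) ^ a * 4, by rcases ha with rfl | rfl <;> decide, by rw [hℓ]; ring⟩
  · refine ⟨(-1) ^ a * 3, by rcases ha with rfl | rfl <;> decide, by rw [hℓ]; ring⟩

end StrongBundle

theorem lambda_strongBundle_eq_ten_general (m n ℓ : ℕ) (hm : 3 ≤ m) (hn : 11 ∣ n) (hn0 : 0 < n)
    (h : ∃ k : ℤ, ∃ a ∈ ({1, 2} : Set ℕ),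
      (ℓ : ℤ) = (11 * k + (-1 : ℤ) ^ a * (4 * m)) % n ∨
      (ℓ : ℤ) = (11 * k + (-1 : ℤ) ^ a * (3 * m)) % n) :
    lambdaNumber (strongBundle m n ℓ) = 10 := by
  have : NeZero n := ⟨hn0.ne'⟩
  have : Nonempty (Fin m × ZMod n) := ⟨(⟨0, by omega⟩, 0)⟩
  have hn3 : 3 ≤ n := by have := Nat.le_of_dvd hn0 hn; omega
  obtain ⟨c, hc, hℓ⟩ := StrongBundle.exists_natCast_eq_mul hn h
  obtain ⟨b, hgood⟩ := StrongBundle.exists_isGoodPair c hc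
  have hseam : (m : ZMod 11) * (b * c) = b * ℓ := by rw [hℓ]; ring
  refine lambdaNumber_eq_of_isL21Labeling
    (StrongBundle.isL21Labeling_val_zmodLabel hn hgood hseam)
    (spanOf_le_of_forall_le fun u => Nat.le_pred_of_lt (ZMod.val_lt _)) fun g hg => ?_
  exact hg.add_two_le_spanOf (by norm_num) (StrongBundle.eight_le_ncard_neighborSet hm hn3)

theorem lambda_strongBundle_eq_ten (m n ℓ : ℕ) (hm : 3 ≤ m) (hn : 11 ∣ n) (hn0 : 0 < n)
    (hℓ : ℓ < n)
    (h : ∃ k : ℤ, ∃ a ∈ ({1, 2} : Set ℕ),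
      (ℓ : ℤ) = (11 * k + (-1 : ℤ) ^ a * (4 * m)) % n ∨
      (ℓ : ℤ) = (11 * k + (-1 : ℤ) ^ a * (3 * m)) % n) :
    lambdaNumber (strongBundle m n ℓ) = 10 :=
  lambda_strongBundle_eq_ten_general m n ℓ hm hn hn0 h
end

section
/- Let m ≥ 3 and let n be a positive multiple of 11, and let 0 ≤ ℓ < n. Suppose there exists an integer k such that ℓ = (11k − 4m) mod n. Then the map f₁ defined on the vertices of the strong graph bundle C_m ⊠^{σ_ℓ} C_n by f₁(i,j) = (2i + 5j) mod 11 is an L(2,1)-labeling whose labels all lie in {0,1,…,10}. -/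
/-!
Write the bundle as the quotient of `ℤ × ZMod n` by `(i + m, j) ∼ (i, j + ℓ)`. Every edge is then a
translation by some nonzero `(a, b) ∈ {-1, 0, 1}²`, and the hypothesis `ℓ ≡ -4m (mod 11)` makes
`(i, j) ↦ 2i + 5j` a well-defined homomorphism to `ZMod 11`. It maps the eight nonzero
displacements to the eight distinct residues `2, …, 9`, none within `1` of `0`: this gives the
distance-one condition, and two neighbours of a vertex with equal labels are translates of it by
the same displacement, hence equal, which gives the distance-two condition.
-/

lemma ZMod.two_le_abs_val_sub {N : ℕ} [NeZero N] {x y : ZMod N}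
    (h : x - y ∉ ({-1, 0, 1} : Finset (ZMod N))) : 2 ≤ |(x.val : ℤ) - y.val| := by
  by_contra hlt
  rw [not_le, abs_lt] at hlt
  have hsub : x - y = (((x.val : ℤ) - y.val : ℤ) : ZMod N) := by
    push_cast; simp only [ZMod.natCast_zmod_val]
  have : (x.val : ℤ) - y.val = -1 ∨ (x.val : ℤ) - y.val = 0 ∨ (x.val : ℤ) - y.val = 1 := by
    omega
  apply h
  rcases this with h' | h' | h' <;> (rw [hsub, h']; simp)

lemma SimpleGraph.ne_of_dist_eq_two {V α : Type*} {G : SimpleGraph V} {f : V → α}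
    (hf : ∀ w, Set.InjOn f (G.neighborSet w)) {u v : V} (h : G.dist u v = 2) : f u ≠ f v := by
  have hreach : G.Reachable u v := Reachable.of_dist_ne_zero (by omega)
  have hedist : G.edist u v = 2 := by rw [← hreach.coe_dist_eq_edist, h]; rfl
  obtain ⟨hne, -, w, hw⟩ := edist_eq_two_iff.mp hedist
  rw [mem_commonNeighbors] at hw
  exact fun heq => hne (hf w hw.1.symm hw.2.symm heq)

namespace StrongBundle

variable {m n ℓ : ℕ}

/-- `v = u + (a, b)` in the quotient of `ℤ × ZMod n` by `(i + m, j) ∼ (i, j + ℓ)`; `t` counts the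
crossings of the seam. -/
def IsDisplacement (ℓ : ℕ) (a b : ℤ) (u v : Fin m × ZMod n) : Prop :=
  ∃ t : ℤ, (v.1 : ℤ) + t * m = u.1 + a ∧ v.2 = u.2 + b + t * ℓ

lemma IsDisplacement.refl (u : Fin m × ZMod n) : IsDisplacement ℓ 0 0 u u :=
  ⟨0, by simp, by simp⟩

lemma IsDisplacement.symm {a b : ℤ} {u v : Fin m × ZMod n} (h : IsDisplacement ℓ a b u v) :
    IsDisplacement ℓ (-a) (-b) v u := by
  obtain ⟨t, h1, h2⟩ := h
  exact ⟨-t, by linarith, by simp [h2]; ring⟩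

lemma IsDisplacement.unique {a b : ℤ} {w u v : Fin m × ZMod n}
    (hu : IsDisplacement ℓ a b w u) (hv : IsDisplacement ℓ a b w v) : u = v := by
  obtain ⟨t, hu1, hu2⟩ := hu
  obtain ⟨t', hv1, hv2⟩ := hv
  have hm : (0 : ℤ) < m := by have := w.1.isLt; omega
  obtain ⟨ht, hu⟩ := (Int.ediv_emod_unique (a := w.1 + a) (r := (u.1 : ℤ)) (q := t) hm).mpr
    ⟨by linarith, by positivity, by exact_mod_cast u.1.isLt⟩
  obtain ⟨ht', hv⟩ := (Int.ediv_emod_unique (a := w.1 + a) (r := (v.1 : ℤ)) (q := t') hm).mpr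
    ⟨by linarith, by positivity, by exact_mod_cast v.1.isLt⟩
  exact Prod.ext (Fin.ext (by omega)) (by rw [hu2, hv2, ← ht, ← ht'])

lemma exists_isDisplacement_of_bundleStep {u v : Fin m × ZMod n} (h : bundleStep m n ℓ u v) :
    ∃ a b : SignType, IsDisplacement ℓ a b u v := by
  have hm : 0 < m := by have := u.1.isLt; omega
  rcases h with ⟨h1, h2 | h2⟩ | ⟨h1, h2 | h2 | h2⟩ | ⟨h1, h1', h2 | h2 | h2⟩
  · exact ⟨0, 1, 0, by simp [h1], by simp [h2]⟩
  · exact ⟨0, -1, 0, by simp [h1], by simp [h2, sub_eq_add_neg]⟩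
  · exact ⟨1, -1, 0, by simp [← h1], by simp [h2, sub_eq_add_neg]⟩
  · exact ⟨1, 0, 0, by simp [← h1], by simp [h2]⟩
  · exact ⟨1, 1, 0, by simp [← h1], by simp [h2]⟩
  · exact ⟨1, -1, 1, by simp [h1, h1']; omega, by simp [h2]; ring⟩
  · exact ⟨1, 0, 1, by simp [h1, h1']; omega, by simp [h2]⟩
  · exact ⟨1, 1, 1, by simp [h1, h1']; omega, by simp [h2]; ring⟩

lemma exists_isDisplacement_of_adj {u v : Fin m × ZMod n} (h : (strongBundle m n ℓ).Adj u v) :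
    ∃ a b : SignType, ¬(a = 0 ∧ b = 0) ∧ IsDisplacement ℓ a b u v := by
  obtain ⟨hne, hstep | hstep⟩ := h
  · obtain ⟨a, b, hd⟩ := exists_isDisplacement_of_bundleStep hstep
    refine ⟨a, b, ?_, hd⟩
    rintro ⟨rfl, rfl⟩
    exact hne ((IsDisplacement.refl u).unique (by simpa using hd))
  · obtain ⟨a, b, hd⟩ := exists_isDisplacement_of_bundleStep hstep
    refine ⟨-a, -b, ?_, by simpa using hd.symm⟩
    rintro ⟨ha, hb⟩
    rw [SignType.neg_eq_zero_iff] at ha hb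
    subst ha hb
    exact hne ((IsDisplacement.refl v).unique (by simpa using hd)).symm

def label (v : Fin m × ZMod n) : ZMod 11 :=
  2 * ((v.1 : ℕ) : ZMod 11) + 5 * (v.2.val : ZMod 11)

lemma val_label (v : Fin m × ZMod n) : (label v).val = (2 * v.1 + 5 * v.2.val) % 11 := by
  rw [← ZMod.val_natCast]; simp [label]

lemma label_eq_add_of_isDisplacement [NeZero n] (hn : 11 ∣ n)
    (hℓ : (5 * ℓ : ZMod 11) = 2 * m) {a b : ℤ} {u v : Fin m × ZMod n}
    (h : IsDisplacement ℓ a b u v) : label v = label u + (2 * a + 5 * b) := by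
  obtain ⟨t, h1, h2⟩ := h
  have h1' : ((v.1 : ℕ) : ZMod 11) + t * m = (u.1 : ℕ) + a := by
    exact_mod_cast congrArg (Int.cast : ℤ → ZMod 11) h1
  have h2' : (v.2.val : ZMod 11) = u.2.val + b + t * ℓ := by
    simp only [ZMod.natCast_val, h2, ZMod.cast_add hn, ZMod.cast_mul hn, ZMod.cast_intCast hn,
      ZMod.cast_natCast hn]
  simp only [label]
  linear_combination 2 * h1' + 5 * h2' + t * hℓ

lemma eq_of_two_mul_add_five_mul_eq {a b a' b' : SignType}
    (h : 2 * ((a : ℤ) : ZMod 11) + 5 * ((b : ℤ) : ZMod 11) =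
      2 * ((a' : ℤ) : ZMod 11) + 5 * ((b' : ℤ) : ZMod 11)) : a = a' ∧ b = b' := by
  revert a b a' b'; decide

lemma eq_zero_of_two_mul_add_five_mul_mem {a b : SignType}
    (h : 2 * ((a : ℤ) : ZMod 11) + 5 * ((b : ℤ) : ZMod 11) ∈ ({-1, 0, 1} : Finset (ZMod 11))) :
    a = 0 ∧ b = 0 := by
  revert a b; decide

lemma isL21Labeling_val_label [NeZero n] (hn : 11 ∣ n) (hℓ : (5 * ℓ : ZMod 11) = 2 * m) :
    IsL21Labeling (strongBundle m n ℓ) fun v => (label v).val := by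
  constructor
  · intro u v huv
    obtain ⟨a, b, hab, hd⟩ := exists_isDisplacement_of_adj huv.symm
    refine ZMod.two_le_abs_val_sub fun hmem => hab (eq_zero_of_two_mul_add_five_mul_mem ?_)
    rwa [label_eq_add_of_isDisplacement hn hℓ hd, add_sub_cancel_left] at hmem
  · intro u v huv
    have hne : label u ≠ label v := by
      refine SimpleGraph.ne_of_dist_eq_two (fun w x hx y hy hxy => ?_) huv
      obtain ⟨a, b, -, hx⟩ := exists_isDisplacement_of_adj hx
      obtain ⟨a', b', -, hy⟩ := exists_isDisplacement_of_adj hy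
      rw [label_eq_add_of_isDisplacement hn hℓ hx, label_eq_add_of_isDisplacement hn hℓ hy,
        add_right_inj] at hxy
      obtain ⟨rfl, rfl⟩ := eq_of_two_mul_add_five_mul_eq hxy
      exact hx.unique hy
    exact Int.one_le_abs (sub_ne_zero.mpr (by exact_mod_cast (ZMod.val_injective 11).ne hne))

lemma five_mul_cast_eq_two_mul {k : ℤ} (hn : 11 ∣ n) (h : (ℓ : ℤ) = (11 * k - 4 * m) % n) :
    (5 * ℓ : ZMod 11) = 2 * m := by
  have hmod : (ℓ : ℤ) ≡ 11 * k - 4 * m [ZMOD 11] :=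
    h ▸ (Int.mod_modEq _ _).of_dvd (Int.natCast_dvd_natCast.mpr hn)
  have hcast := (ZMod.intCast_eq_intCast_iff _ _ 11).mpr hmod
  push_cast at hcast
  have h11 : (11 : ZMod 11) = 0 := rfl
  rw [hcast]
  linear_combination (5 * k - 2 * m : ZMod 11) * h11

end StrongBundle

theorem f1_isL21Labeling_general (m n ℓ : ℕ) (hn : 11 ∣ n) (hn0 : 0 < n)
    (h : ∃ k : ℤ, (ℓ : ℤ) = (11 * k - 4 * m) % n) :
    IsL21Labeling (strongBundle m n ℓ)
      (fun v => (2 * (v.1 : ℕ) + 5 * v.2.val) % 11) ∧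
    ∀ v : Fin m × ZMod n, (2 * (v.1 : ℕ) + 5 * v.2.val) % 11 ≤ 10 := by
  have : NeZero n := ⟨hn0.ne'⟩
  obtain ⟨k, hk⟩ := h
  have hlabel : (fun v : Fin m × ZMod n => (2 * (v.1 : ℕ) + 5 * v.2.val) % 11) =
      fun v => (StrongBundle.label v).val := funext fun v => (StrongBundle.val_label v).symm
  refine ⟨hlabel ▸ StrongBundle.isL21Labeling_val_label hn
    (StrongBundle.five_mul_cast_eq_two_mul hn hk), fun v => ?_⟩
  exact Nat.le_of_lt_succ (Nat.mod_lt _ (by norm_num))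

theorem f1_isL21Labeling (m n ℓ : ℕ) (hm : 3 ≤ m) (hn : 11 ∣ n) (hn0 : 0 < n) (hℓ : ℓ < n)
    (h : ∃ k : ℤ, (ℓ : ℤ) = (11 * k - 4 * m) % n) :
    IsL21Labeling (strongBundle m n ℓ)
      (fun v => (2 * (v.1 : ℕ) + 5 * v.2.val) % 11) ∧
    ∀ v : Fin m × ZMod n, (2 * (v.1 : ℕ) + 5 * v.2.val) % 11 ≤ 10 :=
  f1_isL21Labeling_general m n ℓ hn hn0 h
end

section
/- Let m ≥ 3 and let n be a positive multiple of 11, and let 0 ≤ ℓ < n. Suppose there exists an integer k such that ℓ = (11k − 3m) mod n. Then the map g₁ defined on the vertices of the strong graph bundle C_m ⊠^{σ_ℓ} C_n by g₁(i,j) = (5i + 2j) mod 11 is an L(2,1)-labeling whose labels all lie in {0,1,…,10}. -/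
/-!
Lift the bundle to its cover `ℤ × ℤ`, on which `g₁` is the linear form `5x + 2y` mod 11: an edge
moves by `(a, b)` with `|a|, |b| ≤ 1` and crosses the seam `c` times, which shifts the fiber by
`cℓ`. Since `2ℓ ≡ -6m (mod 11)`, crossing the seam changes the label by `2ℓ - 5m ≡ -11m ≡ 0`, so
the label changes by `5a + 2b` along an edge. That is never `0` or `±1` mod 11, which gives the
distance-one condition. The map `(a, b) ↦ 5a + 2b` is injective on `{-1, 0, 1}²` mod 11, so the
neighbours of a vertex get pairwise distinct labels, which gives the distance-two condition.
-/

theorem eq_zero_of_five_mul_add_two_mul_eq_zero {a b : ℤ} (ha : |a| ≤ 2) (hb : |b| ≤ 2)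
    (h : ((5 * a + 2 * b : ℤ) : ZMod 11) = 0) : a = 0 ∧ b = 0 := by
  obtain ⟨ha₁, ha₂⟩ := abs_le.mp ha
  obtain ⟨hb₁, hb₂⟩ := abs_le.mp hb
  interval_cases a <;> interval_cases b <;> revert h <;> decide

theorem eq_zero_of_five_mul_add_two_mul_eq_small {a b k : ℤ} (ha : |a| ≤ 1) (hb : |b| ≤ 1)
    (hk : |k| ≤ 1) (h : ((5 * a + 2 * b : ℤ) : ZMod 11) = k) : a = 0 ∧ b = 0 := by
  obtain ⟨ha₁, ha₂⟩ := abs_le.mp ha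
  obtain ⟨hb₁, hb₂⟩ := abs_le.mp hb
  obtain ⟨hk₁, hk₂⟩ := abs_le.mp hk
  interval_cases a <;> interval_cases b <;> interval_cases k <;> revert h <;> decide

theorem isL21Labeling_val {V : Type*} {G : SimpleGraph V} {N : ℕ} [NeZero N] {φ : V → ZMod N}
    (hadj : ∀ u v, G.Adj u v → ∀ k : ℤ, |k| ≤ 1 → φ u - φ v ≠ k)
    (hnbr : ∀ w u v, G.Adj w u → G.Adj w v → φ u = φ v → u = v) :
    IsL21Labeling G (fun v => (φ v).val) := by
  refine ⟨fun u v huv => ?_, fun u v hd => ?_⟩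
  · by_contra! hlt
    refine hadj u v huv ((φ u).val - (φ v).val) (Int.abs_le_one_iff.mpr ?_) ?_
    · rcases abs_lt.mp hlt with ⟨h₁, h₂⟩
      omega
    · push_cast
      simp only [ZMod.natCast_zmod_val]
  · obtain ⟨hne, -, w, hwu, hwv⟩ :=
      G.edist_eq_two_iff.mp ((ENat.toNat_eq_iff two_ne_zero).mp hd)
    have hφ : φ u ≠ φ v := fun h => hne (hnbr w u v hwu.symm hwv.symm h)
    have hval : (φ u).val ≠ (φ v).val := fun h => hφ (ZMod.val_injective N h)
    exact Int.one_le_abs (sub_ne_zero.mpr (by exact_mod_cast hval))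

/-- The lifts of `w` and `u` to the cover `ℤ × ℤ` differ by `(a, b)`, the path between them
crossing the seam `c` times. -/
def IsDisplacement (m n ℓ : ℕ) (w u : Fin m × ZMod n) (a b c : ℤ) : Prop :=
  (u.1 : ℤ) = w.1 + a - m * c ∧ u.2 = w.2 + b + c * ℓ

def bundleLabel (m n : ℕ) (v : Fin m × ZMod n) : ZMod 11 :=
  5 * ((v.1 : ℕ) : ZMod 11) + 2 * (v.2.cast : ZMod 11)

section Bundle

variable {m n ℓ : ℕ}

namespace IsDisplacement

theorem refl (w : Fin m × ZMod n) : IsDisplacement m n ℓ w w 0 0 0 := by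
  simp [IsDisplacement]

theorem symm {w u : Fin m × ZMod n} {a b c : ℤ} (h : IsDisplacement m n ℓ w u a b c) :
    IsDisplacement m n ℓ u w (-a) (-b) (-c) := by
  obtain ⟨h₁, h₂⟩ := h
  constructor
  · linear_combination -h₁
  · push_cast
    linear_combination -h₂

theorem eq {w u v : Fin m × ZMod n} {a b c c' : ℤ} (hu : IsDisplacement m n ℓ w u a b c)
    (hv : IsDisplacement m n ℓ w v a b c') : u = v := by
  obtain ⟨hu₁, hu₂⟩ := hu
  obtain ⟨hv₁, hv₂⟩ := hv
  have hc : c = c' := by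
    have hu_lt := u.1.isLt
    have hv_lt := v.1.isLt
    by_contra hne
    rcases lt_or_gt_of_ne hne with h | h <;> nlinarith
  subst hc
  exact Prod.ext (Fin.ext (by omega)) (hu₂.trans hv₂.symm)

end IsDisplacement

theorem exists_isDisplacement_of_bundleStep {w u : Fin m × ZMod n}
    (h : bundleStep m n ℓ w u) :
    ∃ a b c : ℤ, |a| ≤ 1 ∧ |b| ≤ 1 ∧ IsDisplacement m n ℓ w u a b c := by
  have hw := w.1.isLt
  rcases h with ⟨h₁, h₂ | h₂⟩ | ⟨h₁, h₂ | h₂ | h₂⟩ | ⟨h₁, h₂, h₃ | h₃ | h₃⟩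
  · exact ⟨0, 1, 0, by norm_num, by norm_num, by simp [h₁], by simp [h₂]⟩
  · exact ⟨0, -1, 0, by norm_num, by norm_num, by simp [h₁], by simp [h₂, sub_eq_add_neg]⟩
  · exact ⟨1, -1, 0, by norm_num, by norm_num, by omega, by simp [h₂, sub_eq_add_neg]⟩
  · exact ⟨1, 0, 0, by norm_num, by norm_num, by omega, by simp [h₂]⟩
  · exact ⟨1, 1, 0, by norm_num, by norm_num, by omega, by simp [h₂]⟩
  · exact ⟨1, -1, 1, by norm_num, by norm_num, by omega, by simp [h₃]; ring⟩
  · exact ⟨1, 0, 1, by norm_num, by norm_num, by omega, by simp [h₃]⟩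
  · exact ⟨1, 1, 1, by norm_num, by norm_num, by omega, by simp [h₃]; ring⟩

theorem exists_isDisplacement_of_adj {w u : Fin m × ZMod n} (h : (strongBundle m n ℓ).Adj w u) :
    ∃ a b c : ℤ, |a| ≤ 1 ∧ |b| ≤ 1 ∧ IsDisplacement m n ℓ w u a b c := by
  rcases h.2 with h | h
  · exact exists_isDisplacement_of_bundleStep h
  · obtain ⟨a, b, c, ha, hb, hd⟩ := exists_isDisplacement_of_bundleStep h
    exact ⟨-a, -b, -c, by rwa [abs_neg], by rwa [abs_neg], hd.symm⟩

theorem val_bundleLabel [NeZero n] (v : Fin m × ZMod n) :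
    (bundleLabel m n v).val = (5 * (v.1 : ℕ) + 2 * v.2.val) % 11 := by
  rw [bundleLabel, ← ZMod.natCast_val, ← ZMod.val_natCast]
  push_cast
  rfl

/-- Crossing the seam changes `5i + 2j` by `2ℓ - 5m ≡ -11m ≡ 0 (mod 11)`. -/
theorem bundleLabel_sub_of_isDisplacement (hn : 11 ∣ n) (hℓ : (ℓ : ZMod 11) = -3 * m)
    {w u : Fin m × ZMod n} {a b c : ℤ} (h : IsDisplacement m n ℓ w u a b c) :
    bundleLabel m n u - bundleLabel m n w = ((5 * a + 2 * b : ℤ) : ZMod 11) := by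
  obtain ⟨h₁, h₂⟩ := h
  have hi : ((u.1 : ℕ) : ZMod 11) = (w.1 : ℕ) + a - m * c := by
    exact_mod_cast congrArg (Int.cast : ℤ → ZMod 11) h₁
  have hj : (u.2.cast : ZMod 11) = w.2.cast + b + c * ℓ := by
    simp only [← ZMod.castHom_apply (h := hn), h₂, map_add, map_mul, map_intCast, map_natCast]
  have h11 : (11 : ZMod 11) = 0 := rfl
  simp only [bundleLabel, hi, hj]
  push_cast
  linear_combination (2 * c : ZMod 11) * hℓ - (m * c : ZMod 11) * h11

theorem natCast_eq_neg_three_mul_of_eq_emod (hn : 11 ∣ n)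
    (h : ∃ k : ℤ, (ℓ : ℤ) = (11 * k - 3 * m) % n) : (ℓ : ZMod 11) = -3 * m := by
  obtain ⟨k, hk⟩ := h
  have hmod := congrArg (Int.cast : ℤ → ZMod 11) hk
  rw [(ZMod.intCast_eq_intCast_iff _ _ 11).mpr
    (Int.emod_emod_of_dvd _ (Int.natCast_dvd_natCast.mpr hn))] at hmod
  have h11 : (11 : ZMod 11) = 0 := rfl
  push_cast at hmod
  linear_combination hmod + (k : ZMod 11) * h11

theorem bundleLabel_sub_ne_of_adj (hn : 11 ∣ n) (hℓ : (ℓ : ZMod 11) = -3 * m)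
    {u v : Fin m × ZMod n} (h : (strongBundle m n ℓ).Adj u v) {k : ℤ} (hk : |k| ≤ 1) :
    bundleLabel m n u - bundleLabel m n v ≠ k := by
  intro hlabel
  obtain ⟨a, b, c, ha, hb, hd⟩ := exists_isDisplacement_of_adj h.symm
  rw [bundleLabel_sub_of_isDisplacement hn hℓ hd] at hlabel
  obtain ⟨rfl, rfl⟩ := eq_zero_of_five_mul_add_two_mul_eq_small ha hb hk hlabel
  exact h.ne (hd.eq (IsDisplacement.refl v))

theorem bundleLabel_injOn_neighbors (hn : 11 ∣ n) (hℓ : (ℓ : ZMod 11) = -3 * m)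
    {w u v : Fin m × ZMod n} (hu : (strongBundle m n ℓ).Adj w u)
    (hv : (strongBundle m n ℓ).Adj w v) (hlabel : bundleLabel m n u = bundleLabel m n v) :
    u = v := by
  obtain ⟨a, b, c, ha, hb, hdu⟩ := exists_isDisplacement_of_adj hu
  obtain ⟨a', b', c', ha', hb', hdv⟩ := exists_isDisplacement_of_adj hv
  have hzero : ((5 * (a - a') + 2 * (b - b') : ℤ) : ZMod 11) = 0 := by
    have hu' := bundleLabel_sub_of_isDisplacement hn hℓ hdu
    have hv' := bundleLabel_sub_of_isDisplacement hn hℓ hdv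
    push_cast at hu' hv' ⊢
    linear_combination hv' - hu' + hlabel
  obtain ⟨haa, hbb⟩ := eq_zero_of_five_mul_add_two_mul_eq_zero
    ((abs_sub _ _).trans (by linarith)) ((abs_sub _ _).trans (by linarith)) hzero
  rw [sub_eq_zero] at haa hbb
  subst haa hbb
  exact hdu.eq hdv

end Bundle

theorem g1_isL21Labeling_general (m n ℓ : ℕ) (hn : 11 ∣ n) (hn0 : 0 < n)
    (h : ∃ k : ℤ, (ℓ : ℤ) = (11 * k - 3 * m) % n) :
    IsL21Labeling (strongBundle m n ℓ)
      (fun v => (5 * (v.1 : ℕ) + 2 * v.2.val) % 11) ∧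
    ∀ v : Fin m × ZMod n, (5 * (v.1 : ℕ) + 2 * v.2.val) % 11 ≤ 10 := by
  have : NeZero n := ⟨hn0.ne'⟩
  have hℓ := natCast_eq_neg_three_mul_of_eq_emod hn h
  refine ⟨?_, fun v => Nat.le_of_lt_succ (Nat.mod_lt _ (by norm_num))⟩
  simp only [← val_bundleLabel]
  exact isL21Labeling_val (fun u v huv _ hk => bundleLabel_sub_ne_of_adj hn hℓ huv hk)
    (fun _ _ _ hu hv => bundleLabel_injOn_neighbors hn hℓ hu hv)

theorem g1_isL21Labeling (m n ℓ : ℕ) (hm : 3 ≤ m) (hn : 11 ∣ n) (hn0 : 0 < n) (hℓ : ℓ < n)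
    (h : ∃ k : ℤ, (ℓ : ℤ) = (11 * k - 3 * m) % n) :
    IsL21Labeling (strongBundle m n ℓ)
      (fun v => (5 * (v.1 : ℕ) + 2 * v.2.val) % 11) ∧
    ∀ v : Fin m × ZMod n, (5 * (v.1 : ℕ) + 2 * v.2.val) % 11 ≤ 10 :=
  g1_isL21Labeling_general m n ℓ hn hn0 h
end

section
/- Let G be a finite simple graph with maximum degree Δ ≥ 2. If G contains three distinct vertices u, v, w each of degree Δ such that u is adjacent to both v and w, then λ(G) ≥ Δ + 2. -/
/-
If some labeling had span at most `Δ + 1`, a vertex `x` of degree `Δ` whose label lies strictly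
between the smallest and largest label could not be labelled: its `Δ` neighbours carry pairwise
distinct labels (any two are adjacent or at distance two), all different from the three labels
`f x - 1, f x, f x + 1`, and only `Δ + 2` labels are available. So `u, v, w` all carry extreme
labels; `v` and `w` differ from `u` by at least two, hence both carry the opposite extreme label,
which is impossible for two vertices with the common neighbour `u`.
-/

namespace SimpleGraph

variable {V : Type*} {G : SimpleGraph V}

theorem dist_eq_two_of_adj_of_adj {x y z : V} (hxy : G.Adj x y) (hxz : G.Adj x z) (hyz : y ≠ z)
    (hnadj : ¬G.Adj y z) : G.dist y z = 2 := by
  have hedist : G.edist y z = 2 :=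
    edist_eq_two_iff.mpr ⟨hyz, hnadj, ⟨x, G.mem_commonNeighbors.mpr ⟨hxy.symm, hxz.symm⟩⟩⟩
  simp [dist, hedist]

end SimpleGraph

open SimpleGraph Finset

theorem isL21Labeling_two_mul_of_injective {V : Type*} (G : SimpleGraph V) {g : V → ℕ}
    (hg : Function.Injective g) : IsL21Labeling G (fun x => 2 * g x) := by
  have hlabel : ∀ x y, x ≠ y → 2 ≤ |((2 * g x : ℕ) : ℤ) - ((2 * g y : ℕ) : ℤ)| := by
    intro x y hxy
    have := hg.ne hxy
    rw [le_abs]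
    omega
  refine ⟨fun x y h => hlabel x y h.ne, fun x y h => ?_⟩
  have hxy : x ≠ y := by
    rintro rfl
    simp at h
  linarith [hlabel x y hxy]

namespace IsL21Labeling

variable {V : Type*} {G : SimpleGraph V} {f : V → ℕ}

theorem ne_of_adj (hf : IsL21Labeling G f) {x y : V} (h : G.Adj x y) : f x ≠ f y := by
  intro hxy
  simpa [hxy] using hf.1 x y h

theorem ne_of_adj_of_adj_s9 (hf : IsL21Labeling G f) {x y z : V} (hxy : G.Adj x y)
    (hxz : G.Adj x z) (hyz : y ≠ z) : f y ≠ f z := by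
  by_cases hadj : G.Adj y z
  · exact hf.ne_of_adj hadj
  · intro hfyz
    simpa [hfyz] using hf.2 y z (dist_eq_two_of_adj_of_adj hxy hxz hyz hadj)

theorem injOn_neighborSet (hf : IsL21Labeling G f) (x : V) : Set.InjOn f (G.neighborSet x) :=
  fun _ hy _ hz hfyz => by_contra fun hyz => hf.ne_of_adj_of_adj_s9 hy hz hyz hfyz

theorem notMem_Icc_of_adj (hf : IsL21Labeling G f) {x y : V} (h : G.Adj x y) :
    f y ∉ Icc (f x - 1) (f x + 1) := by
  have := le_abs.mp (hf.1 x y h)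
  rw [mem_Icc]
  omega

theorem degree_add_two_le {x : V} [Fintype (G.neighborSet x)] (hf : IsL21Labeling G f)
    {m M : ℕ} (hm : ∀ y, m ≤ f y) (hM : ∀ y, f y ≤ M) (hmx : m < f x) (hxM : f x < M) :
    G.degree x + 2 ≤ M - m := by
  have hdisj : Disjoint ((G.neighborFinset x).image f) (Icc (f x - 1) (f x + 1)) := by
    simp only [Finset.disjoint_left, mem_image, mem_neighborFinset]
    rintro _ ⟨y, hy, rfl⟩
    exact hf.notMem_Icc_of_adj hy
  have hsub : (G.neighborFinset x).image f ∪ Icc (f x - 1) (f x + 1) ⊆ Icc m M := by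
    intro a ha
    simp only [mem_union, mem_image, mem_Icc] at ha ⊢
    rcases ha with ⟨y, -, rfl⟩ | ha
    · exact ⟨hm y, hM y⟩
    · omega
  have hinj : Set.InjOn f (G.neighborFinset x) := by
    simpa using hf.injOn_neighborSet x
  have hcard := card_le_card hsub
  rw [card_union_of_disjoint hdisj, card_image_of_injOn hinj, card_neighborFinset_eq_degree,
    Nat.card_Icc, Nat.card_Icc] at hcard
  omega

theorem eq_or_eq_of_sub_le_degree_add_one {x : V} [Fintype (G.neighborSet x)]
    (hf : IsL21Labeling G f) {m M : ℕ} (hm : ∀ y, m ≤ f y) (hM : ∀ y, f y ≤ M)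
    (hspan : M - m ≤ G.degree x + 1) : f x = m ∨ f x = M := by
  by_contra! hx
  have := hf.degree_add_two_le hm hM ((hm x).lt_of_ne' hx.1) ((hM x).lt_of_ne hx.2)
  omega

end IsL21Labeling

theorem lambda_ge_maxDegree_add_two_general {V : Type*} [Fintype V] (G : SimpleGraph V)
    [DecidableRel G.Adj]
    (u v w : V) (hvw : v ≠ w)
    (hdu : G.degree u = G.maxDegree) (hdv : G.degree v = G.maxDegree)
    (hdw : G.degree w = G.maxDegree)
    (hadj1 : G.Adj u v) (hadj2 : G.Adj u w) :
    G.maxDegree + 2 ≤ lambdaNumber G := by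
  -- some labeling must exist, otherwise `lambdaNumber G` is the junk value `sInf ∅ = 0`
  obtain ⟨g, hg⟩ := Countable.exists_injective_nat V
  refine le_csInf ⟨_, _, isL21Labeling_two_mul_of_injective G hg, rfl⟩ ?_
  rintro _ ⟨f, hf, rfl⟩
  by_contra! hspan
  set m := sInf (Set.range f)
  set M := sSup (Set.range f)
  have hm : ∀ x, m ≤ f x := fun x => Nat.sInf_le ⟨x, rfl⟩
  have hM : ∀ x, f x ≤ M := fun x => le_csSup (Set.finite_range f).bddAbove ⟨x, rfl⟩
  have hextreme : ∀ x, G.degree x = G.maxDegree → f x = m ∨ f x = M := fun x hx =>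
    hf.eq_or_eq_of_sub_le_degree_add_one hm hM (by rw [hx]; exact Nat.le_of_lt_succ hspan)
  have huv := hf.ne_of_adj hadj1
  have huw := hf.ne_of_adj hadj2
  have hfvw : f v = f w := by
    rcases hextreme u hdu with _ | _ <;> rcases hextreme v hdv with _ | _ <;>
      rcases hextreme w hdw with _ | _ <;> omega
  exact hf.ne_of_adj_of_adj_s9 hadj1 hadj2 hvw hfvw

theorem lambda_ge_maxDegree_add_two {V : Type*} [Fintype V] (G : SimpleGraph V)
    [DecidableRel G.Adj] (hΔ : 2 ≤ G.maxDegree)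
    (u v w : V) (huv : u ≠ v) (huw : u ≠ w) (hvw : v ≠ w)
    (hdu : G.degree u = G.maxDegree) (hdv : G.degree v = G.maxDegree)
    (hdw : G.degree w = G.maxDegree)
    (hadj1 : G.Adj u v) (hadj2 : G.Adj u w) :
    G.maxDegree + 2 ≤ lambdaNumber G :=
  lambda_ge_maxDegree_add_two_general G u v w hvw hdu hdv hdw hadj1 hadj2
end
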